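/- Let α ∈ (0,1) and let (a_k)_{k≥0} be a sequence of nonnegative real numbers satisfying a_k ≤ (1 − α)² a_{k−1} + α (1 − α)^k a_0 for all k ≥ 1. Then a_k ≤ 2 (1 − α)^k a_0 for all k ≥ 0. -/

import Mathlib

/-! The recursion in fact gives the sharper bound `a k ≤ (1 - α) ^ k * a 0`, by induction: the
inductive step is the identity `(1 - α)² (1 - α)^k + α (1 - α)^(k+1) = (1 - α)^(k+1)`.
Nonnegativity of `a k` then makes the right-hand side nonnegative, so doubling it is harmless. -/

theorem le_one_sub_pow_mul_of_le_sq_mul_add {R : Type*} [CommRing R] [LinearOrder R]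
    [IsStrictOrderedRing R] (α : R) (a : ℕ → R)
    (hrec : ∀ n, a (n + 1) ≤ (1 - α) ^ 2 * a n + α * (1 - α) ^ (n + 1) * a 0) :
    ∀ n, a n ≤ (1 - α) ^ n * a 0
  | 0 => by simp
  | n + 1 => calc
      a (n + 1) ≤ (1 - α) ^ 2 * a n + α * (1 - α) ^ (n + 1) * a 0 := hrec n
      _ ≤ (1 - α) ^ 2 * ((1 - α) ^ n * a 0) + α * (1 - α) ^ (n + 1) * a 0 := by
        gcongr
        exact le_one_sub_pow_mul_of_le_sq_mul_add α a hrec n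
      _ = (1 - α) ^ (n + 1) * a 0 := by ring

theorem seq_le_two_geom (α : ℝ) (a : ℕ → ℝ)
    (ha : ∀ k, 0 ≤ a k)
    (hrec : ∀ k : ℕ, 1 ≤ k → a k ≤ (1 - α) ^ 2 * a (k - 1) + α * (1 - α) ^ k * a 0) :
    ∀ k : ℕ, a k ≤ 2 * (1 - α) ^ k * a 0 := by
  intro k
  have hgeom : a k ≤ (1 - α) ^ k * a 0 :=
    le_one_sub_pow_mul_of_le_sq_mul_add α a (fun n => by simpa using hrec (n + 1) n.succ_pos) k
  linarith [ha k]
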